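/- arXiv:1708.09357 — 3 statements merged into one kernel-verified Lean document; each statement's English description precedes it below -/
import Mathlib

section
/- Let α ∈ ℝ, let I ⊆ ℝ be an open interval, and let u : I → ℝ be twice differentiable and satisfy u''(x) = 2u(x)³ + x·u(x) − α on I. If x₀ ∈ I satisfies f(x₀) = 0, where f(x) := 2u(x)² − 2u'(x) + x, then f'(x₀) = 2α + 1. -/
open Filter Topology Set

/-- The auxiliary function `f(x) = 2 u(x)^2 - 2 u'(x) + x` appearing in the
Bäcklund transformation for Painlevé II. -/
def piiF (u u' : ℝ → ℝ) : ℝ → ℝ := fun x => 2 * (u x) ^ 2 - 2 * u' x + x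

/-!
`f' = 4 u u' - 2 u'' + 1`. Where `f` vanishes, `u' = u² + x / 2`, so `4 u u' = 4 u³ + 2 x u`,
which is exactly cancelled by `-2 u'' = -4 u³ - 2 x u + 2 α`.
-/

theorem hasDerivAt_piiF {u u' : ℝ → ℝ} {a b x : ℝ} (hu : HasDerivAt u a x)
    (hu' : HasDerivAt u' b x) : HasDerivAt (piiF u u') (4 * u x * a - 2 * b + 1) x := by
  refine ((((hu.pow 2).const_mul 2).sub (hu'.const_mul 2)).add (hasDerivAt_id x)).congr_deriv ?_
  push_cast
  ring

theorem piiF_deriv_at_zero_general (α : ℝ) (I : Set ℝ) (u u' u'' : ℝ → ℝ)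
    (hu : ∀ x ∈ I, HasDerivAt u (u' x) x)
    (hu' : ∀ x ∈ I, HasDerivAt u' (u'' x) x)
    (hPII : ∀ x ∈ I, u'' x = 2 * (u x) ^ 3 + x * u x - α)
    (x₀ : ℝ) (hx₀ : x₀ ∈ I) (hfx₀ : piiF u u' x₀ = 0) :
    HasDerivAt (piiF u u') (2 * α + 1) x₀ := by
  have hu'_eq : u' x₀ = u x₀ ^ 2 + x₀ / 2 := by
    simp only [piiF] at hfx₀
    linarith
  convert hasDerivAt_piiF (hu x₀ hx₀) (hu' x₀ hx₀) using 1
  rw [hPII x₀ hx₀, hu'_eq]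
  ring

/-- if `u` solves the inhomogeneous Painlevé II equation
`u'' = 2 u^3 + x u - α` on an open interval `I` and `f(x₀) = 0` for some
`x₀ ∈ I`, where `f = 2 u^2 - 2 u' + x`, then `f'(x₀) = 2 α + 1`. -/
theorem piiF_deriv_at_zero (α : ℝ) (I : Set ℝ) (hIopen : IsOpen I)
    (hIconn : I.OrdConnected) (u u' u'' : ℝ → ℝ)
    (hu : ∀ x ∈ I, HasDerivAt u (u' x) x)
    (hu' : ∀ x ∈ I, HasDerivAt u' (u'' x) x)
    (hPII : ∀ x ∈ I, u'' x = 2 * (u x) ^ 3 + x * u x - α)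
    (x₀ : ℝ) (hx₀ : x₀ ∈ I) (hfx₀ : piiF u u' x₀ = 0) :
    HasDerivAt (piiF u u') (2 * α + 1) x₀ :=
  piiF_deriv_at_zero_general α I u u' u'' hu hu' hPII x₀ hx₀ hfx₀
end

section
/- Let α ∈ ℝ, p ∈ ℂ, r > 0, and let u be analytic on the punctured disc {z ∈ ℂ : 0 < |z − p| < r} and satisfy u''(z) = 2u(z)³ + z·u(z) − α there. Suppose u has a simple pole at p with residue +1, i.e. (z − p)·u(z) → 1 as z → p. Then the function g(z) := u(z) − 1/(z − p) extends to a function analytic at p with g(p) = 0, g'(p) = −p/6, and g''(p) = (α − 1)/2; equivalently, u(z) = 1/(z − p) − (p/6)(z − p) + ((α − 1)/4)(z − p)² + O((z − p)³) as z → p. -/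
open Filter Topology Set Metric

/-! Write `u = G + 1/(z - p)`; since `(z - p) u → 1`, the removable singularity theorem makes `G`
analytic at `p`. Substituting into the equation and multiplying by `(z - p)²`, the `(z - p)⁻¹`
terms cancel and leave the identity
`(z-p)² G'' = 6G + 6(z-p)G² + 2(z-p)²G³ + z(z-p) + z(z-p)²G - α(z-p)²`
between functions analytic at `p`. Expanding `G = G(p) + (z-p)(G'(p) + (z-p)R)`, where `G''(p) = 2R(p)`,
and letting `z → p` after dividing by successive powers of `z - p` yields `G(p) = 0`, then
`6G'(p) + p = 0`, then `G''(p) = 6R(p) + 1 - α`. -/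

section

variable {𝕜 : Type*} [NontriviallyNormedField 𝕜]

theorem analyticAt_dslope {E : Type*} [NormedAddCommGroup E] [NormedSpace 𝕜 E] {f : 𝕜 → E}
    {a : 𝕜} (hf : AnalyticAt 𝕜 f a) : AnalyticAt 𝕜 (dslope f a) a :=
  let ⟨_, hq⟩ := hf
  ⟨_, hq.has_fpower_series_dslope_fslope⟩

theorem eventually_deriv_eq_add_div_sub_pow {f H : 𝕜 → 𝕜} {p c : 𝕜} {k : ℕ}
    (hH : ∀ᶠ z in 𝓝[≠] p, DifferentiableAt 𝕜 H z)
    (hf : ∀ᶠ z in 𝓝[≠] p, f z = H z + c / (z - p) ^ k) :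
    ∀ᶠ z in 𝓝[≠] p, deriv f z = deriv H z + -(k * c) / (z - p) ^ (k + 1) := by
  filter_upwards [eventually_eventually_nhdsWithin.2 hf, hH, self_mem_nhdsWithin]
    with z hfz hHz (hz : z ≠ p)
  rw [isOpen_compl_singleton.nhdsWithin_eq hz] at hfz
  have hzp : (z - p) ^ k ≠ 0 := pow_ne_zero k (sub_ne_zero.2 hz)
  have hderiv : HasDerivAt (fun w => H w + c / (w - p) ^ k)
      (deriv H z + (0 * (z - p) ^ k - c * (k * (z - p) ^ (k - 1) * 1)) / ((z - p) ^ k) ^ 2) z :=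
    hHz.hasDerivAt.add <|
      (hasDerivAt_const z c).div (((hasDerivAt_id z).sub_const p).pow k) hzp
  rw [EventuallyEq.deriv_eq hfz, hderiv.deriv]
  rcases k with _ | k
  · simp
  · rw [Nat.add_sub_cancel]
    field_simp
    ring

theorem deriv_deriv_const_add_sub_mul {H : 𝕜 → 𝕜} {p : 𝕜} (a : 𝕜)
    (hH : ∀ᶠ z in 𝓝 p, DifferentiableAt 𝕜 H z) (hH' : DifferentiableAt 𝕜 (deriv H) p) :
    deriv (deriv fun z => a + (z - p) * H z) p = 2 * deriv H p := by
  have hderiv : deriv (fun z => a + (z - p) * H z) =ᶠ[𝓝 p]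
      fun z => H z + (z - p) * deriv H z := by
    filter_upwards [hH] with z hz
    have : HasDerivAt (fun z => a + (z - p) * H z) (1 * H z + (z - p) * deriv H z) z :=
      (((hasDerivAt_id z).sub_const p).mul hz.hasDerivAt).const_add a
    rw [this.deriv, one_mul]
  have : HasDerivAt (fun z => H z + (z - p) * deriv H z)
      (deriv H p + (1 * deriv H p + (p - p) * deriv (deriv H) p)) p :=
    hH.self_of_nhds.hasDerivAt.add (((hasDerivAt_id p).sub_const p).mul hH'.hasDerivAt)
  rw [hderiv.deriv_eq, this.deriv]
  ring

theorem AnalyticAt.exists_eq_taylor_two [CompleteSpace 𝕜] {G : 𝕜 → 𝕜} {p : 𝕜}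
    (hG : AnalyticAt 𝕜 G p) :
    ∃ R : 𝕜 → 𝕜, AnalyticAt 𝕜 R p ∧
      (∀ z, G z = G p + (z - p) * (deriv G p + (z - p) * R z)) ∧
      deriv (deriv G) p = 2 * R p := by
  have hG₁ := analyticAt_dslope hG
  refine ⟨dslope (dslope G p) p, analyticAt_dslope hG₁, fun z => ?_, ?_⟩
  · have h₀ := sub_smul_dslope G p z
    have h₁ := sub_smul_dslope (dslope G p) p z
    rw [smul_eq_mul] at h₀ h₁
    rw [← dslope_same]
    linear_combination -h₀ - (z - p) * h₁
  · have hexp : G = fun z => G p + (z - p) * dslope G p z := by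
      ext z
      rw [← smul_eq_mul, sub_smul_dslope]
      ring
    conv_lhs => rw [hexp]
    rw [dslope_same, deriv_deriv_const_add_sub_mul _
      (hG₁.eventually_analyticAt.mono fun _ h => h.differentiableAt)
      hG₁.deriv.differentiableAt]

end

theorem exists_analyticAt_eq_add_div_sub_of_tendsto {u : ℂ → ℂ} {p c : ℂ}
    (hu : ∀ᶠ z in 𝓝[≠] p, DifferentiableAt ℂ u z)
    (hpole : Tendsto (fun z => (z - p) * u z) (𝓝[≠] p) (𝓝 c)) :
    ∃ G : ℂ → ℂ, AnalyticAt ℂ G p ∧ ∀ᶠ z in 𝓝[≠] p, u z = G z + c / (z - p) := by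
  set f := Function.update (fun z => (z - p) * u z) p c with hf_def
  have hf : AnalyticAt ℂ f p := by
    refine Complex.analyticAt_of_differentiable_on_punctured_nhds_of_continuousAt ?_
      (continuousAt_update_same.2 hpole)
    filter_upwards [hu, self_mem_nhdsWithin] with z hz (hzp : z ≠ p)
    have hfF : f =ᶠ[𝓝 z] fun w => (w - p) * u w :=
      (eventually_ne_nhds hzp).mono fun w hw => Function.update_of_ne hw _ _
    exact ((differentiableAt_id.sub_const p).mul hz).congr_of_eventuallyEq hfF
  refine ⟨dslope f p, analyticAt_dslope hf, ?_⟩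
  filter_upwards [self_mem_nhdsWithin] with z (hz : z ≠ p)
  rw [dslope_of_ne _ hz, slope_def_field, hf_def, Function.update_self, Function.update_of_ne hz]
  field_simp [sub_ne_zero.2 hz]
  ring

theorem painleveII_regular_part_eq {K : Type*} [Field K] {α z p G G'' : K} (hz : z ≠ p)
    (hode : G'' + 2 / (z - p) ^ 3 = 2 * (G + 1 / (z - p)) ^ 3 + z * (G + 1 / (z - p)) - α) :
    (z - p) ^ 2 * G'' = 6 * G + 6 * (z - p) * G ^ 2 + 2 * (z - p) ^ 2 * G ^ 3 + z * (z - p)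
      + z * (z - p) ^ 2 * G - α * (z - p) ^ 2 := by
  have hw : z - p ≠ 0 := sub_ne_zero.2 hz
  field_simp at hode
  apply mul_left_cancel₀ hw
  linear_combination hode

theorem painleveII_regular_part_taylor_coeffs {α p : ℂ} {G : ℂ → ℂ} (hG : AnalyticAt ℂ G p)
    (hode : ∀ᶠ z in 𝓝[≠] p, deriv (deriv G) z + 2 / (z - p) ^ 3
      = 2 * (G z + 1 / (z - p)) ^ 3 + z * (G z + 1 / (z - p)) - α) :
    G p = 0 ∧ deriv G p = -p / 6 ∧ deriv (deriv G) p = (α - 1) / 2 := by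
  have eval {A B : ℂ → ℂ} (hA : ContinuousAt A p) (hB : ContinuousAt B p)
      (h : A =ᶠ[𝓝[≠] p] B) : A p = B p :=
    ((hA.eventuallyEq_nhds_iff_eventuallyEq_nhdsNE hB).1 h).eq_of_nhds
  have hid := hode.mp <| eventually_mem_nhdsWithin.mono fun z hz h =>
    painleveII_regular_part_eq hz h
  have hG''c : ContinuousAt (deriv (deriv G)) p := hG.deriv.deriv.continuousAt
  obtain ⟨R, hR, hGR, hG''R⟩ := hG.exists_eq_taylor_two
  have hRc := hR.continuousAt
  have hGp : G p = 0 := by simpa using eval (by fun_prop) (by fun_prop) hid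
  set b := deriv G p
  set T := fun z => b + (z - p) * R z
  have hid₁ : ∀ᶠ z in 𝓝[≠] p, (z - p) * (deriv (deriv G) z - (6 * R z + 1
      + 6 * (z - p) * T z ^ 2 + 2 * (z - p) ^ 3 * T z ^ 3 + z * (z - p) * T z - α)) = 6 * b + p := by
    filter_upwards [hid, self_mem_nhdsWithin] with z hz (hzp : z ≠ p)
    rw [hGR z, hGp] at hz
    apply mul_left_cancel₀ (sub_ne_zero.2 hzp)
    linear_combination hz
  have hb : b = -p / 6 := by
    linear_combination -(eval (by fun_prop) continuousAt_const hid₁) / 6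
  have hid₂ : ∀ᶠ z in 𝓝[≠] p, deriv (deriv G) z = 6 * R z + 1
      + 6 * (z - p) * T z ^ 2 + 2 * (z - p) ^ 3 * T z ^ 3 + z * (z - p) * T z - α := by
    filter_upwards [hid₁, self_mem_nhdsWithin] with z hz (hzp : z ≠ p)
    rw [hb, show 6 * (-p / 6) + p = 0 by ring] at hz
    exact sub_eq_zero.1 ((mul_eq_zero.1 hz).resolve_left (sub_ne_zero.2 hzp))
  have hG''p := eval hG''c (by fun_prop) hid₂
  refine ⟨hGp, hb, ?_⟩
  linear_combination (3 * hG''R - hG''p) / 2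

/-- if `u` is analytic on the punctured disc of radius `r`
around `p`, solves `u'' = 2 u^3 + z u - α` there, and has a simple pole at
`p` with residue `+1`, then `g(z) = u(z) - 1/(z-p)` extends analytically to
`p` with `g(p) = 0`, `g'(p) = -p/6` and `g''(p) = (α-1)/2`. -/
theorem pii_laurent_residue_plus_one (α : ℝ) (p : ℂ) (r : ℝ) (hr : 0 < r)
    (u : ℂ → ℂ) (hu : AnalyticOnNhd ℂ u (ball p r \ {p}))
    (hPII : ∀ z ∈ ball p r \ {p},
      deriv (deriv u) z = 2 * (u z) ^ 3 + z * u z - (α : ℂ))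
    (hpole : Tendsto (fun z => (z - p) * u z) (𝓝[≠] p) (𝓝 1)) :
    ∃ G : ℂ → ℂ, AnalyticAt ℂ G p ∧
      (∀ᶠ z in 𝓝[≠] p, G z = u z - 1 / (z - p)) ∧
      G p = 0 ∧ deriv G p = -p / 6 ∧
      deriv (deriv G) p = ((α : ℂ) - 1) / 2 := by
  have hdisc : ∀ᶠ z in 𝓝[≠] p, z ∈ ball p r \ {p} :=
    sdiff_mem_nhdsWithin_compl (ball_mem_nhds p hr) _
  obtain ⟨G, hG, huG⟩ := exists_analyticAt_eq_add_div_sub_of_tendsto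
    (hdisc.mono fun z hz => (hu z hz).differentiableAt) hpole
  have hGnear : ∀ᶠ z in 𝓝[≠] p, AnalyticAt ℂ G z :=
    hG.eventually_analyticAt.filter_mono nhdsWithin_le_nhds
  have hu' := eventually_deriv_eq_add_div_sub_pow (f := u) (c := 1) (k := 1)
    (hGnear.mono fun _ h => h.differentiableAt) (huG.mono fun z h => by rw [h, pow_one])
  have hu'' := eventually_deriv_eq_add_div_sub_pow
    (hGnear.mono fun _ h => h.deriv.differentiableAt) hu'
  have hode : ∀ᶠ z in 𝓝[≠] p, deriv (deriv G) z + 2 / (z - p) ^ 3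
      = 2 * (G z + 1 / (z - p)) ^ 3 + z * (G z + 1 / (z - p)) - α := by
    filter_upwards [huG, hu'', hdisc] with z hz hz'' hzd
    have := hPII z hzd
    rw [hz'', hz] at this
    linear_combination this
  obtain ⟨h0, h1, h2⟩ := painleveII_regular_part_taylor_coeffs hG hode
  exact ⟨G, hG, huG.mono fun z h => by rw [h]; ring, h0, h1, h2⟩
end

section
/- Let α ∈ (−1/2, 1/2) and let u : ℝ → ℝ be twice differentiable, satisfy u''(x) = 2u(x)³ + x·u(x) − α on all of ℝ, and suppose f(x) := 2u(x)² − 2u'(x) + x satisfies f(x) → +∞ as x → +∞ and f(x) → −∞ as x → −∞ (as holds for the Ablowitz–Segur solutions, whose asymptotics give f(x) ~ x as x → ±∞). Then there is exactly one x₁ ∈ ℝ with f(x₁) = 0, and f'(x₁) = 2α + 1. Consequently the Bäcklund transform v(x) := −u(x) + (2α+1)/f(x) is defined and continuous on ℝ ∖ {x₁}, and it blows up at x₁ as a simple pole with residue +1: (x − x₁)·v(x) → 1 as x → x₁. That is, the quasi-Ablowitz–Segur solution with parameter α + 1 ∈ (1/2, 3/2) has exactly one real pole, with residue +1. -/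
open Filter Topology Set

/-- The Bäcklund transform `v(x) = -u(x) + (2α+1)/f(x)` of a solution `u`
of Painlevé II with parameter `α`. -/
noncomputable def backlund (α : ℝ) (u u' : ℝ → ℝ) : ℝ → ℝ :=
  fun x => -u x + (2 * α + 1) / piiF u u' x

/-!
Differentiating `f = 2u² - 2u' + x` and substituting Painlevé II gives the linear equation
`f' = -2u f + (2α + 1)`. With `U' = u`, the function `e^{2U} f` therefore has derivative
`(2α + 1) e^{2U} > 0`, so it is strictly increasing and `f` vanishes at most once; the limits of
`f` at `±∞` and the intermediate value theorem give a zero `x₁`. There `f'(x₁) = 2α + 1 ≠ 0`,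
so `f(x) ~ (2α + 1)(x - x₁)` and `(x - x₁) v(x) → 1`.
-/

theorem piiF_hasDerivAt {α : ℝ} {u u' u'' : ℝ → ℝ}
    (hu : ∀ x, HasDerivAt u (u' x) x) (hu' : ∀ x, HasDerivAt u' (u'' x) x)
    (hPII : ∀ x, u'' x = 2 * (u x) ^ 3 + x * u x - α) (x : ℝ) :
    HasDerivAt (piiF u u') (-2 * u x * piiF u u' x + (2 * α + 1)) x := by
  have h : HasDerivAt (piiF u u') (2 * (2 * u x ^ 1 * u' x) - 2 * u'' x + 1) x :=
    ((((hu x).pow 2).const_mul 2).sub ((hu' x).const_mul 2)).add (hasDerivAt_id x)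
  refine h.congr_deriv ?_
  simp only [piiF, hPII x]
  ring

theorem strictMono_exp_neg_integral_mul_of_hasDerivAt {f p q : ℝ → ℝ}
    (hf : ∀ x, HasDerivAt f (p x * f x + q x) x) (hp : Continuous p) (hq : ∀ x, 0 < q x) :
    StrictMono fun x => Real.exp (-∫ t in (0 : ℝ)..x, p t) * f x := by
  refine strictMono_of_hasDerivAt_pos (f' := fun x => Real.exp (-∫ t in (0 : ℝ)..x, p t) * q x)
    (fun x => ?_) fun x => mul_pos (Real.exp_pos _) (hq x)
  refine (((hp.integral_hasStrictDerivAt 0 x).hasDerivAt.neg.exp).mul (hf x)).congr_deriv ?_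
  simp only [Pi.neg_apply]
  ring

theorem subsingleton_zeros_of_hasDerivAt {f p q : ℝ → ℝ}
    (hf : ∀ x, HasDerivAt f (p x * f x + q x) x) (hp : Continuous p) (hq : ∀ x, 0 < q x) :
    {x | f x = 0}.Subsingleton := by
  intro x hx y hy
  refine (strictMono_exp_neg_integral_mul_of_hasDerivAt hf hp hq).injective ?_
  simp only [hx.out, hy.out, mul_zero]

theorem tendsto_sub_div_of_hasDerivAt {f : ℝ → ℝ} {d x₀ : ℝ} (hf : HasDerivAt f d x₀)
    (hf₀ : f x₀ = 0) (hd : d ≠ 0) :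
    Tendsto (fun x => (x - x₀) / f x) (𝓝[≠] x₀) (𝓝 d⁻¹) := by
  refine (hf.tendsto_slope.inv₀ hd).congr' ?_
  filter_upwards with x
  rw [slope_def_field, hf₀, sub_zero, inv_div]

theorem tendsto_sub_mul_add_div_of_hasDerivAt {f g : ℝ → ℝ} {d x₀ : ℝ}
    (hf : HasDerivAt f d x₀) (hf₀ : f x₀ = 0) (hd : d ≠ 0) (hg : ContinuousAt g x₀) :
    Tendsto (fun x => (x - x₀) * (g x + d / f x)) (𝓝[≠] x₀) (𝓝 1) := by
  have hregular : Tendsto (fun x => (x - x₀) * g x) (𝓝[≠] x₀) (𝓝 0) := by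
    have h : ContinuousAt (fun x => (x - x₀) * g x) x₀ :=
      (continuous_sub_right x₀).continuousAt.mul hg
    simpa using h.tendsto.mono_left nhdsWithin_le_nhds
  have hpole := (tendsto_sub_div_of_hasDerivAt hf hf₀ hd).const_mul d
  rw [mul_inv_cancel₀ hd] at hpole
  simpa only [zero_add, mul_add, mul_div_left_comm] using hregular.add hpole

/-- Proposition 3.1: let `α ∈ (-1/2, 1/2)` and let `u` be a
globally smooth real solution of Painlevé II with parameter `α` such that
`f = 2 u^2 - 2 u' + x` tends to `+∞` at `+∞` and to `-∞` at `-∞` (as for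
the Ablowitz–Segur solutions).  Then `f` has exactly one real zero `x₁`,
`f'(x₁) = 2α + 1`, and the Bäcklund transform `v = -u + (2α+1)/f` (the
quasi-Ablowitz–Segur solution with parameter `α + 1`) is continuous off
`x₁` and has a simple pole of residue `+1` at `x₁`. -/
theorem qAS_one_pole (α : ℝ) (hα : α ∈ Set.Ioo (-(1:ℝ)/2) (1/2))
    (u u' u'' : ℝ → ℝ)
    (hu : ∀ x, HasDerivAt u (u' x) x)
    (hu' : ∀ x, HasDerivAt u' (u'' x) x)
    (hPII : ∀ x, u'' x = 2 * (u x) ^ 3 + x * u x - α)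
    (hftop : Tendsto (piiF u u') atTop atTop)
    (hfbot : Tendsto (piiF u u') atBot atBot) :
    ∃ x₁ : ℝ, piiF u u' x₁ = 0 ∧ (∀ y, piiF u u' y = 0 → y = x₁) ∧
      HasDerivAt (piiF u u') (2 * α + 1) x₁ ∧
      ContinuousOn (backlund α u u') {x | x ≠ x₁} ∧
      Tendsto (fun x => (x - x₁) * backlund α u u' x) (𝓝[≠] x₁) (𝓝 1) := by
  have hk : 0 < 2 * α + 1 := by linarith [hα.1]
  have hf' := piiF_hasDerivAt hu hu' hPII
  have hu_cont : Continuous u := continuous_iff_continuousAt.2 fun x => (hu x).continuousAt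
  have hf_cont : Continuous (piiF u u') :=
    continuous_iff_continuousAt.2 fun x => (hf' x).continuousAt
  obtain ⟨x₁, hx₁⟩ := hf_cont.surjective hftop hfbot 0
  have huniq : ∀ y, piiF u u' y = 0 → y = x₁ := fun y hy =>
    subsingleton_zeros_of_hasDerivAt (p := fun x => -2 * u x) hf' (by fun_prop) (fun _ => hk)
      hy hx₁
  have hderiv : HasDerivAt (piiF u u') (2 * α + 1) x₁ := by simpa [hx₁] using hf' x₁
  refine ⟨x₁, hx₁, huniq, hderiv, ?_, ?_⟩
  · exact hu_cont.neg.continuousOn.add <|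
      continuousOn_const.div hf_cont.continuousOn fun x hx h => hx (huniq x h)
  · exact tendsto_sub_mul_add_div_of_hasDerivAt hderiv hx₁ hk.ne' hu_cont.neg.continuousAt
end
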